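/- In the pseudo-Riemannian Lie algebra family, the scalar curvature is τ = −(3/2)(λ₁² + λ₂² − λ₃² − λ₄²), and the following conditions are equivalent: (i) ‖∇P‖² = 0; (ii) τ = 0; (iii) ‖N‖² = 0; (iv) λ₁² + λ₂² − λ₃² − λ₄² = 0. -/

import Mathlib

/-!
Write `c_ik = [X_i, X_k]` and `S = λ₁² + λ₂² − λ₃² − λ₄²`. Since `P X_i = ε_i X_i` with `ε_i = ±1`
and `P` is a `g`-isometry, every Lie algebra structure on the basis satisfies
`τ = ¼ Σ ε_i ε_k g(c_ik, c_ik)`, `‖N‖² = 16 τ` (as `N(X_i, X_k)` is `±2 c_ik` or `±2 P c_ik`), and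
`‖∇P‖² = 2 τ − ½ Σ ε_i g(P c_ik, c_ik)`. For the given brackets the two sums are `−6 S` and `2 S`,
so `τ`, `‖N‖²` and `‖∇P‖²` are the nonzero multiples `−3/2 S`, `−24 S` and `−4 S` of `S`.
-/

noncomputable section

/-- The signature `(2,2)` of the pseudo-Riemannian metric: `ε = (1, 1, −1, −1)`. -/
def eps : Fin 4 → ℝ := ![1, 1, -1, -1]

/-- The pseudo-Riemannian metric of signature `(2,2)` with
`g(X₁,X₁) = g(X₂,X₂) = 1`, `g(X₃,X₃) = g(X₄,X₄) = −1` and `g(Xᵢ,Xⱼ) = 0` for `i ≠ j`. -/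
def gP {L : Type*} [AddCommGroup L] [Module ℝ L] (b : Module.Basis (Fin 4) ℝ L) (x y : L) : ℝ :=
  ∑ i, eps i * (b.repr x i * b.repr y i)

/-- The almost product structure `P` with `PX₁ = X₁`, `PX₂ = X₂`, `PX₃ = −X₃`, `PX₄ = −X₄`. -/
def PP {L : Type*} [AddCommGroup L] [Module ℝ L] (b : Module.Basis (Fin 4) ℝ L) : L →ₗ[ℝ] L :=
  b.constr ℝ ![b 0, b 1, -b 2, -b 3]

/-- `(∇ₓP)y = (1/2)([x,Py] − P[x,y])`. -/
def nablaPP {L : Type*} [LieRing L] [LieAlgebra ℝ L] (b : Module.Basis (Fin 4) ℝ L) (x y : L) : L :=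
  (2⁻¹ : ℝ) • (⁅x, PP b y⁆ - PP b ⁅x, y⁆)

/-- `F(x,y,z) = g((∇ₓP)y, z)`. -/
def FP {L : Type*} [LieRing L] [LieAlgebra ℝ L] (b : Module.Basis (Fin 4) ℝ L) (x y z : L) : ℝ :=
  gP b (nablaPP b x y) z

/-- The curvature tensor `R(x,y,z,w) = −(1/4)g([x,y],[z,w])`. -/
def RTP {L : Type*} [LieRing L] [LieAlgebra ℝ L] (b : Module.Basis (Fin 4) ℝ L) (x y z w : L) : ℝ :=
  -(4⁻¹ : ℝ) * gP b ⁅x, y⁆ ⁅z, w⁆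

/-- The Ricci tensor `ρ(y,z) = Σᵢ εᵢ R(Xᵢ,y,z,Xᵢ)`. -/
def ricP {L : Type*} [LieRing L] [LieAlgebra ℝ L] (b : Module.Basis (Fin 4) ℝ L) (y z : L) : ℝ :=
  ∑ i, eps i * RTP b (b i) y z (b i)

/-- The scalar curvature `τ = Σᵢ εᵢ ρ(Xᵢ,Xᵢ)`. -/
def tauP {L : Type*} [LieRing L] [LieAlgebra ℝ L] (b : Module.Basis (Fin 4) ℝ L) : ℝ :=
  ∑ i, eps i * ricP b (b i) (b i)

/-- The Nijenhuis tensor `N(x,y) = [x,y] + P[Px,y] + P[x,Py] − [Px,Py]`. -/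
def NijP {L : Type*} [LieRing L] [LieAlgebra ℝ L] (b : Module.Basis (Fin 4) ℝ L) (x y : L) : L :=
  ⁅x, y⁆ + PP b ⁅PP b x, y⁆ + PP b ⁅x, PP b y⁆ - ⁅PP b x, PP b y⁆

/-- The square norm `‖N‖² = Σᵢₖ εᵢ εₖ g(N(Xᵢ,Xₖ), N(Xᵢ,Xₖ))`. -/
def normNijP {L : Type*} [LieRing L] [LieAlgebra ℝ L] (b : Module.Basis (Fin 4) ℝ L) : ℝ :=
  ∑ i, ∑ k, eps i * eps k * gP b (NijP b (b i) (b k)) (NijP b (b i) (b k))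

/-- The square norm `‖∇P‖² = Σᵢₖ εᵢ εₖ g((∇_{Xᵢ}P)Xₖ, (∇_{Xᵢ}P)Xₖ)`. -/
def normNablaPP {L : Type*} [LieRing L] [LieAlgebra ℝ L] (b : Module.Basis (Fin 4) ℝ L) : ℝ :=
  ∑ i, ∑ k, eps i * eps k * gP b (nablaPP b (b i) (b k)) (nablaPP b (b i) (b k))

open Finset

lemma eps_mul_self (i : Fin 4) : eps i * eps i = 1 := by
  fin_cases i <;> norm_num [eps]

section Metric

variable {L : Type*} [AddCommGroup L] [Module ℝ L] (b : Module.Basis (Fin 4) ℝ L)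

lemma PP_basis (i : Fin 4) : PP b (b i) = eps i • b i := by
  fin_cases i <;> simp [PP, eps]

lemma repr_PP (x : L) (j : Fin 4) : b.repr (PP b x) j = eps j * b.repr x j := by
  have h : (b.coord j).comp (PP b) = eps j • b.coord j := b.ext fun i => by
    by_cases hij : i = j
    · subst hij; simp [PP_basis]
    · simp [PP_basis, hij]
  exact LinearMap.congr_fun h x

lemma gP_neg_left (x y : L) : gP b (-x) y = -gP b x y := by
  simp [gP]

lemma gP_neg_right (x y : L) : gP b x (-y) = -gP b x y := by
  simp [gP]

lemma gP_smul_add_smul_PP (α β : ℝ) (c : L) :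
    gP b (α • c + β • PP b c) (α • c + β • PP b c) =
      (α ^ 2 + β ^ 2) * gP b c c + 2 * α * β * gP b (PP b c) c := by
  simp only [gP, map_add, map_smul, Finsupp.add_apply, Finsupp.smul_apply, repr_PP, smul_eq_mul,
    mul_sum, ← sum_add_distrib]
  refine sum_congr rfl fun j _ => ?_
  linear_combination β ^ 2 * eps j * b.repr c j ^ 2 * eps_mul_self j

end Metric

section LieAlgebra

variable {L : Type*} [LieRing L] [LieAlgebra ℝ L] (b : Module.Basis (Fin 4) ℝ L)

def normBracketP : ℝ :=
  ∑ i, ∑ k, eps i * eps k * gP b ⁅b i, b k⁆ ⁅b i, b k⁆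

def normBracketTwistedP : ℝ :=
  ∑ i, ∑ k, eps i * gP b (PP b ⁅b i, b k⁆) ⁅b i, b k⁆

lemma gP_nablaPP_basis (i k : Fin 4) :
    gP b (nablaPP b (b i) (b k)) (nablaPP b (b i) (b k)) =
      (gP b ⁅b i, b k⁆ ⁅b i, b k⁆ - eps k * gP b (PP b ⁅b i, b k⁆) ⁅b i, b k⁆) / 2 := by
  have h : nablaPP b (b i) (b k) = (eps k / 2) • ⁅b i, b k⁆ + (-2⁻¹ : ℝ) • PP b ⁅b i, b k⁆ := by
    rw [nablaPP, PP_basis, lie_smul]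
    module
  rw [h, gP_smul_add_smul_PP]
  linear_combination gP b ⁅b i, b k⁆ ⁅b i, b k⁆ / 4 * eps_mul_self k

lemma gP_NijP_basis (i k : Fin 4) :
    gP b (NijP b (b i) (b k)) (NijP b (b i) (b k)) = 4 * gP b ⁅b i, b k⁆ ⁅b i, b k⁆ := by
  have h : NijP b (b i) (b k) =
      (1 - eps i * eps k) • ⁅b i, b k⁆ + (eps i + eps k) • PP b ⁅b i, b k⁆ := by
    simp only [NijP, PP_basis, lie_smul, smul_lie, map_smul]
    module
  have hsq : (1 - eps i * eps k) ^ 2 + (eps i + eps k) ^ 2 = 4 := by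
    fin_cases i <;> fin_cases k <;> norm_num [eps]
  have hmix : (1 - eps i * eps k) * (eps i + eps k) = 0 := by
    fin_cases i <;> fin_cases k <;> norm_num [eps]
  rw [h, gP_smul_add_smul_PP, hsq, mul_assoc 2, hmix]
  ring

lemma tauP_eq : tauP b = normBracketP b / 4 := by
  simp only [tauP, ricP, RTP, normBracketP, mul_sum, sum_div]
  rw [sum_comm]
  refine sum_congr rfl fun i _ => sum_congr rfl fun k _ => ?_
  rw [← lie_skew (b k) (b i), gP_neg_right]
  ring

lemma normNijP_eq : normNijP b = 16 * tauP b := by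
  have h : normNijP b = 4 * normBracketP b := by
    simp only [normNijP, normBracketP, mul_sum]
    refine sum_congr rfl fun i _ => sum_congr rfl fun k _ => ?_
    rw [gP_NijP_basis]
    ring
  rw [h, tauP_eq]
  ring

lemma normNablaPP_eq : normNablaPP b = normBracketP b / 2 - normBracketTwistedP b / 2 := by
  simp only [normNablaPP, normBracketP, normBracketTwistedP, sum_div, ← sum_sub_distrib]
  refine sum_congr rfl fun i _ => sum_congr rfl fun k _ => ?_
  rw [gP_nablaPP_basis]
  linear_combination -(eps i * gP b (PP b ⁅b i, b k⁆) ⁅b i, b k⁆ / 2) * eps_mul_self k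

end LieAlgebra

structure IsPseudoRiemannianFamily {L : Type*} [LieRing L] [LieAlgebra ℝ L]
    (b : Module.Basis (Fin 4) ℝ L) (l1 l2 l3 l4 : ℝ) : Prop where
  lie_01 : ⁅b 0, b 1⁆ = l2 • b 2 - l1 • b 3
  lie_02 : ⁅b 0, b 2⁆ = l2 • b 1 + l4 • b 3
  lie_03 : ⁅b 0, b 3⁆ = -(l1 • b 1) - l4 • b 2
  lie_12 : ⁅b 1, b 2⁆ = -(l2 • b 0) - l3 • b 3
  lie_13 : ⁅b 1, b 3⁆ = l1 • b 0 + l3 • b 2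
  lie_23 : ⁅b 2, b 3⁆ = -(l4 • b 0) + l3 • b 1

namespace IsPseudoRiemannianFamily

variable {L : Type*} [LieRing L] [LieAlgebra ℝ L] {b : Module.Basis (Fin 4) ℝ L} {l1 l2 l3 l4 : ℝ}

lemma normBracketP_eq (h : IsPseudoRiemannianFamily b l1 l2 l3 l4) :
    normBracketP b = -6 * (l1 ^ 2 + l2 ^ 2 - l3 ^ 2 - l4 ^ 2) := by
  simp only [normBracketP, Fin.sum_univ_four, lie_self, ← lie_skew (b 1) (b 0),
    ← lie_skew (b 2) (b 0), ← lie_skew (b 3) (b 0), ← lie_skew (b 2) (b 1),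
    ← lie_skew (b 3) (b 1), ← lie_skew (b 3) (b 2), gP_neg_left, gP_neg_right, neg_neg,
    h.lie_01, h.lie_02, h.lie_03, h.lie_12, h.lie_13, h.lie_23]
  simp only [gP, Fin.sum_univ_four, eps, map_add, map_sub, map_neg, map_smul, map_zero,
    Module.Basis.repr_self, Finsupp.coe_add, Finsupp.coe_sub, Finsupp.coe_neg, Finsupp.coe_smul,
    Finsupp.coe_zero, Pi.add_apply, Pi.sub_apply, Pi.neg_apply, Pi.smul_apply, Pi.zero_apply,
    Finsupp.single_apply, smul_eq_mul, Fin.reduceEq, ↓reduceIte, Matrix.cons_val]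
  ring

lemma normBracketTwistedP_eq (h : IsPseudoRiemannianFamily b l1 l2 l3 l4) :
    normBracketTwistedP b = 2 * (l1 ^ 2 + l2 ^ 2 - l3 ^ 2 - l4 ^ 2) := by
  simp only [normBracketTwistedP, Fin.sum_univ_four, lie_self, ← lie_skew (b 1) (b 0),
    ← lie_skew (b 2) (b 0), ← lie_skew (b 3) (b 0), ← lie_skew (b 2) (b 1),
    ← lie_skew (b 3) (b 1), ← lie_skew (b 3) (b 2), map_neg, gP_neg_left, gP_neg_right, neg_neg,
    h.lie_01, h.lie_02, h.lie_03, h.lie_12, h.lie_13, h.lie_23]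
  simp only [gP, Fin.sum_univ_four, eps, map_add, map_sub, map_neg, map_smul, map_zero, repr_PP,
    Module.Basis.repr_self, Finsupp.coe_add, Finsupp.coe_sub, Finsupp.coe_neg, Finsupp.coe_smul,
    Finsupp.coe_zero, Pi.add_apply, Pi.sub_apply, Pi.neg_apply, Pi.smul_apply, Pi.zero_apply,
    Finsupp.single_apply, smul_eq_mul, Fin.reduceEq, ↓reduceIte, Matrix.cons_val]
  ring

end IsPseudoRiemannianFamily

/-- In the pseudo-Riemannian family, τ = −(3/2)(λ₁²+λ₂²−λ₃²−λ₄²), and the vanishing of ‖∇P‖², of τ, of ‖N‖², and of λ₁²+λ₂²−λ₃²−λ₄² are all equivalent. -/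
theorem scalar_curvature_and_isotropy_pseudoRiemannian
    (L : Type*) [LieRing L] [LieAlgebra ℝ L] (b : Module.Basis (Fin 4) ℝ L)
    (l1 l2 l3 l4 : ℝ)
    (h12 : ⁅b 0, b 1⁆ = l2 • b 2 - l1 • b 3)
    (h13 : ⁅b 0, b 2⁆ = l2 • b 1 + l4 • b 3)
    (h14 : ⁅b 0, b 3⁆ = -(l1 • b 1) - l4 • b 2)
    (h23 : ⁅b 1, b 2⁆ = -(l2 • b 0) - l3 • b 3)
    (h24 : ⁅b 1, b 3⁆ = l1 • b 0 + l3 • b 2)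
    (h34 : ⁅b 2, b 3⁆ = -(l4 • b 0) + l3 • b 1)
    : tauP b = -(3 / 2) * (l1 ^ 2 + l2 ^ 2 - l3 ^ 2 - l4 ^ 2) ∧
      ((normNablaPP b = 0 ↔ tauP b = 0) ∧
       (tauP b = 0 ↔ normNijP b = 0) ∧
       (normNijP b = 0 ↔ l1 ^ 2 + l2 ^ 2 - l3 ^ 2 - l4 ^ 2 = 0)) := by
  have hfam : IsPseudoRiemannianFamily b l1 l2 l3 l4 := ⟨h12, h13, h14, h23, h24, h34⟩
  have htau : tauP b = -(3 / 2) * (l1 ^ 2 + l2 ^ 2 - l3 ^ 2 - l4 ^ 2) := by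
    rw [tauP_eq, hfam.normBracketP_eq]
    ring
  have hnabla : normNablaPP b = -4 * (l1 ^ 2 + l2 ^ 2 - l3 ^ 2 - l4 ^ 2) := by
    rw [normNablaPP_eq, hfam.normBracketP_eq, hfam.normBracketTwistedP_eq]
    ring
  have hNij : normNijP b = -24 * (l1 ^ 2 + l2 ^ 2 - l3 ^ 2 - l4 ^ 2) := by
    rw [normNijP_eq, htau]
    ring
  refine ⟨htau, ?_, ?_, ?_⟩ <;> simp only [htau, hnabla, hNij] <;> constructor <;> intro h <;> linarith
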